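/- arXiv:2405.05211 — 2 statements merged into one kernel-verified Lean document; each statement's English description precedes it below -/
import Mathlib

section
/- (Cardinality bound via Carathéodory) Given finite random variables X, Y, Z, W with joint distribution p, there exists a joint distribution q on X × Y × Z × U with |U| ≤ |X||Y||Z| + 3 such that the marginal of q on (X,Y,Z) equals that of p, and I_q(Y;Z|U) = I_p(Y;Z|W), I_q(U,Y,Z;X) = I_p(W,Y,Z;X), and I_q(U;X,Y,Z) = I_p(W;X,Y,Z). -/
open scoped BigOperators

/-- Probability that random variable `X` takes value `s`, under pmf `μ` on a finite sample space. -/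
noncomputable def probOf {Ω S : Type*} [Fintype Ω] [DecidableEq S]
    (μ : Ω → ℝ) (X : Ω → S) (s : S) : ℝ :=
  ∑ ω, if X ω = s then μ ω else 0

/-- `μ` is a probability mass function. -/
def IsPMF {Ω : Type*} [Fintype Ω] (μ : Ω → ℝ) : Prop :=
  (∀ ω, 0 ≤ μ ω) ∧ ∑ ω, μ ω = 1

/-- Shannon entropy (in bits) of a finite random variable. -/
noncomputable def entropy {Ω S : Type*} [Fintype Ω] [Fintype S] [DecidableEq S]
    (μ : Ω → ℝ) (X : Ω → S) : ℝ :=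
  ∑ s, -(probOf μ X s * Real.logb 2 (probOf μ X s))

/-- Conditional entropy `H(X|Y)`. -/
noncomputable def condEntropy {Ω S T : Type*} [Fintype Ω] [Fintype S] [Fintype T]
    [DecidableEq S] [DecidableEq T] (μ : Ω → ℝ) (X : Ω → S) (Y : Ω → T) : ℝ :=
  entropy μ (fun ω => (X ω, Y ω)) - entropy μ Y

/-- Mutual information `I(X;Y)`. -/
noncomputable def mutualInfo {Ω S T : Type*} [Fintype Ω] [Fintype S] [Fintype T]
    [DecidableEq S] [DecidableEq T] (μ : Ω → ℝ) (X : Ω → S) (Y : Ω → T) : ℝ :=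
  entropy μ X + entropy μ Y - entropy μ (fun ω => (X ω, Y ω))

/-- Conditional mutual information `I(X;Y|Z)`. -/
noncomputable def condMutualInfo {Ω S T U : Type*} [Fintype Ω] [Fintype S] [Fintype T] [Fintype U]
    [DecidableEq S] [DecidableEq T] [DecidableEq U]
    (μ : Ω → ℝ) (X : Ω → S) (Y : Ω → T) (Z : Ω → U) : ℝ :=
  entropy μ (fun ω => (X ω, Z ω)) + entropy μ (fun ω => (Y ω, Z ω))
    - entropy μ (fun ω => (X ω, Y ω, Z ω)) - entropy μ Z

/-- Independence of two finite random variables. -/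
def IndepRV {Ω S T : Type*} [Fintype Ω] [DecidableEq S] [DecidableEq T]
    (μ : Ω → ℝ) (X : Ω → S) (Y : Ω → T) : Prop :=
  ∀ s t, probOf μ (fun ω => (X ω, Y ω)) (s, t) = probOf μ X s * probOf μ Y t

/-- Conditional independence of `X` and `Y` given `Z`. -/
def CondIndepRV {Ω S T U : Type*} [Fintype Ω] [DecidableEq S] [DecidableEq T] [DecidableEq U]
    (μ : Ω → ℝ) (X : Ω → S) (Y : Ω → T) (Z : Ω → U) : Prop :=
  ∀ s t u, probOf μ (fun ω => (X ω, Y ω, Z ω)) (s, t, u) * probOf μ Z u =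
    probOf μ (fun ω => (X ω, Z ω)) (s, u) * probOf μ (fun ω => (Y ω, Z ω)) (t, u)

set_option linter.unusedSectionVars false

/- ### auxiliary development -/

noncomputable def hfun (x : ℝ) : ℝ := -(x * Real.logb 2 x)

lemma hfun_zero : hfun 0 = 0 := by simp [hfun]

lemma hfun_mul (a b : ℝ) : hfun (a * b) = a * hfun b + b * hfun a := by
  rcases eq_or_ne a 0 with ha | ha
  · simp [hfun, ha]
  rcases eq_or_ne b 0 with hb | hb
  · simp [hfun, hb]
  · simp only [hfun, Real.logb, Real.log_mul ha hb]
    ring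

lemma entropy_eq_hfun {Ω S : Type*} [Fintype Ω] [Fintype S] [DecidableEq S]
    (μ : Ω → ℝ) (X : Ω → S) : entropy μ X = ∑ s, hfun (probOf μ X s) := rfl

lemma probOf_comp_equiv {Ω Ω' S : Type*} [Fintype Ω] [Fintype Ω'] [DecidableEq S]
    (e : Ω' ≃ Ω) (μ : Ω → ℝ) (X : Ω → S) (s : S) :
    probOf (fun b => μ (e b)) (fun b => X (e b)) s = probOf μ X s := by
  unfold probOf
  exact Equiv.sum_comp e (fun a => if X a = s then μ a else 0)

lemma entropy_comp_equiv {Ω Ω' S : Type*} [Fintype Ω] [Fintype Ω'] [Fintype S] [DecidableEq S]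
    (e : Ω' ≃ Ω) (μ : Ω → ℝ) (X : Ω → S) :
    entropy (fun b => μ (e b)) (fun b => X (e b)) = entropy μ X := by
  unfold entropy
  exact Finset.sum_congr rfl fun s _ => by rw [probOf_comp_equiv]

lemma entropy_comp_inj {Ω S T : Type*} [Fintype Ω] [Fintype S] [Fintype T]
    [DecidableEq S] [DecidableEq T]
    (μ : Ω → ℝ) (X : Ω → S) (e : S → T) (he : Function.Injective e) :
    entropy μ (fun ω => e (X ω)) = entropy μ X := by
  have key : ∀ s, probOf μ (fun ω => e (X ω)) (e s) = probOf μ X s := by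
    intro s
    unfold probOf
    exact Finset.sum_congr rfl fun ω _ => by simp [he.eq_iff]
  have hout : ∀ t, t ∉ Finset.univ.image e → probOf μ (fun ω => e (X ω)) t = 0 := by
    intro t ht
    refine Finset.sum_eq_zero fun ω _ => ?_
    rw [if_neg]
    intro h
    exact ht (Finset.mem_image.2 ⟨X ω, Finset.mem_univ _, h⟩)
  show (∑ t, hfun (probOf μ (fun ω => e (X ω)) t)) = ∑ s, hfun (probOf μ X s)
  rw [← Finset.sum_subset (Finset.subset_univ (Finset.univ.image e))
    (fun t _ ht => by rw [hout t ht, hfun_zero])]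
  rw [Finset.sum_image (fun x _ y _ h => he h)]
  exact Finset.sum_congr rfl fun s _ => by rw [key]

/- ### product-form measures on S × W' -/

noncomputable def HofMap {S T : Type*} [Fintype S] [Fintype T] [DecidableEq T]
    (G : S → T) (ρ : S → ℝ) : ℝ :=
  ∑ t, hfun (∑ s ∈ Finset.univ.filter (fun s => G s = t), ρ s)

section Setting

variable {S W' T : Type*} [Fintype S] [Fintype W'] [Fintype T]
  [DecidableEq S] [DecidableEq W'] [DecidableEq T]
  (lam : W' → ℝ) (pr : W' → S → ℝ)

lemma probOf_pairG (G : S → T) (t : T) (w : W') :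
    probOf (fun b : S × W' => lam b.2 * pr b.2 b.1) (fun b => (G b.1, b.2)) (t, w)
      = lam w * ∑ s ∈ Finset.univ.filter (fun s => G s = t), pr w s := by
  unfold probOf
  rw [Fintype.sum_prod_type, Finset.mul_sum, Finset.sum_filter]
  refine Finset.sum_congr rfl fun s _ => ?_
  by_cases h : G s = t
  · simp [h, Prod.ext_iff]
  · simp [h, Prod.ext_iff]

lemma probOf_sndG (w : W') :
    probOf (fun b : S × W' => lam b.2 * pr b.2 b.1) (fun b => b.2) w
      = lam w * ∑ s, pr w s := by
  unfold probOf
  rw [Fintype.sum_prod_type, Finset.mul_sum]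
  refine Finset.sum_congr rfl fun s _ => ?_
  simp

lemma probOf_fstG (G : S → T) (t : T) :
    probOf (fun b : S × W' => lam b.2 * pr b.2 b.1) (fun b => G b.1) t
      = ∑ s ∈ Finset.univ.filter (fun s => G s = t), ∑ w, lam w * pr w s := by
  unfold probOf
  rw [Fintype.sum_prod_type, Finset.sum_filter]
  refine Finset.sum_congr rfl fun s _ => ?_
  by_cases h : G s = t
  · simp [h, mul_comm]
  · simp [h]

lemma entropy_pairG (hpi1 : ∀ w, ∑ s, pr w s = 1) (G : S → T) :
    entropy (fun b : S × W' => lam b.2 * pr b.2 b.1) (fun b => (G b.1, b.2))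
      = (∑ w, hfun (lam w)) + ∑ w, lam w * HofMap G (pr w) := by
  rw [entropy_eq_hfun, Fintype.sum_prod_type]
  have step1 : ∀ t w, hfun (probOf (fun b : S × W' => lam b.2 * pr b.2 b.1)
      (fun b => (G b.1, b.2)) (t, w))
      = lam w * hfun (∑ s ∈ Finset.univ.filter (fun s => G s = t), pr w s)
        + (∑ s ∈ Finset.univ.filter (fun s => G s = t), pr w s) * hfun (lam w) := by
    intro t w
    rw [probOf_pairG, hfun_mul]
  calc (∑ t, ∑ w, hfun (probOf (fun b : S × W' => lam b.2 * pr b.2 b.1)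
        (fun b => (G b.1, b.2)) (t, w)))
      = ∑ w, ∑ t, (lam w * hfun (∑ s ∈ Finset.univ.filter (fun s => G s = t), pr w s)
          + (∑ s ∈ Finset.univ.filter (fun s => G s = t), pr w s) * hfun (lam w)) := by
        rw [Finset.sum_comm]
        exact Finset.sum_congr rfl fun w _ => Finset.sum_congr rfl fun t _ => step1 t w
    _ = ∑ w, (lam w * HofMap G (pr w) + hfun (lam w)) := by
        refine Finset.sum_congr rfl fun w _ => ?_
        rw [Finset.sum_add_distrib, ← Finset.mul_sum, ← Finset.sum_mul]
        rw [Finset.sum_fiberwise Finset.univ G (pr w), hpi1 w, one_mul]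
        rfl
    _ = (∑ w, hfun (lam w)) + ∑ w, lam w * HofMap G (pr w) := by
        rw [Finset.sum_add_distrib, add_comm]

lemma entropy_sndG (hpi1 : ∀ w, ∑ s, pr w s = 1) :
    entropy (fun b : S × W' => lam b.2 * pr b.2 b.1) (fun b => b.2)
      = ∑ w, hfun (lam w) := by
  rw [entropy_eq_hfun]
  refine Finset.sum_congr rfl fun w _ => ?_
  rw [probOf_sndG, hpi1 w, mul_one]

lemma entropy_fstG (G : S → T) :
    entropy (fun b : S × W' => lam b.2 * pr b.2 b.1) (fun b => G b.1)
      = HofMap G (fun s => ∑ w, lam w * pr w s) := by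
  rw [entropy_eq_hfun]
  unfold HofMap
  refine Finset.sum_congr rfl fun t _ => ?_
  rw [probOf_fstG]

end Setting
section QLemmas
set_option maxHeartbeats 1000000

variable {𝒳 𝒴 𝒵 W' : Type*} [Fintype 𝒳] [Fintype 𝒴] [Fintype 𝒵] [Fintype W']
  [DecidableEq 𝒳] [DecidableEq 𝒴] [DecidableEq 𝒵] [DecidableEq W']

noncomputable def g1 (ρ : 𝒳 × 𝒴 × 𝒵 → ℝ) : ℝ :=
  HofMap (fun s => s.2.1) ρ + HofMap (fun s => s.2.2) ρ - HofMap (fun s => s.2) ρ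

noncomputable def g2 (ρ : 𝒳 × 𝒴 × 𝒵 → ℝ) : ℝ :=
  HofMap (fun s => s.2) ρ - HofMap (id : 𝒳 × 𝒴 × 𝒵 → 𝒳 × 𝒴 × 𝒵) ρ

noncomputable def g3 (ρ : 𝒳 × 𝒴 × 𝒵 → ℝ) : ℝ :=
  - HofMap (id : 𝒳 × 𝒴 × 𝒵 → 𝒳 × 𝒴 × 𝒵) ρ


lemma inj1 {𝒴 𝒵 W' : Type*} :
    Function.Injective (fun c : (𝒴 × 𝒵) × W' => (c.1.1, c.1.2, c.2)) := by
  intro c c' h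
  simp only [Prod.mk.injEq] at h
  exact Prod.ext (Prod.ext h.1 h.2.1) h.2.2

lemma inj2 {𝒴 𝒵 W' : Type*} :
    Function.Injective (fun c : (𝒴 × 𝒵) × W' => (c.2, c.1.1, c.1.2)) := by
  intro c c' h
  simp only [Prod.mk.injEq] at h
  exact Prod.ext (Prod.ext h.2.1 h.2.2) h.1

lemma inj3 {𝒳 𝒴 𝒵 W' : Type*} :
    Function.Injective (fun c : (𝒳 × 𝒴 × 𝒵) × W' => ((c.2, c.1.2.1, c.1.2.2), c.1.1)) := by
  intro c c' h
  simp only [Prod.mk.injEq] at h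
  exact Prod.ext (Prod.ext h.2 (Prod.ext h.1.2.1 h.1.2.2)) h.1.1

lemma inj4 {𝒳 𝒴 𝒵 W' : Type*} :
    Function.Injective (fun c : (𝒳 × 𝒴 × 𝒵) × W' => (c.2, c.1.1, c.1.2.1, c.1.2.2)) := by
  intro c c' h
  simp only [Prod.mk.injEq] at h
  exact Prod.ext (Prod.ext h.2.1 (Prod.ext h.2.2.1 h.2.2.2)) h.1

variable (lam : W' → ℝ) (pr : W' → 𝒳 × 𝒴 × 𝒵 → ℝ)

lemma Q1 (hpi1 : ∀ w, ∑ s, pr w s = 1) :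
    condMutualInfo (fun b : (𝒳 × 𝒴 × 𝒵) × W' => lam b.2 * pr b.2 b.1)
      (fun b => b.1.2.1) (fun b => b.1.2.2) (fun b => b.2)
    = ∑ w, lam w * g1 (pr w) := by
  have hYU : entropy (fun b : (𝒳 × 𝒴 × 𝒵) × W' => lam b.2 * pr b.2 b.1)
      (fun b => (b.1.2.1, b.2))
      = (∑ w, hfun (lam w)) + ∑ w, lam w * HofMap (fun s => s.2.1) (pr w) :=
    entropy_pairG lam pr hpi1 (fun s => s.2.1)
  have hZU : entropy (fun b : (𝒳 × 𝒴 × 𝒵) × W' => lam b.2 * pr b.2 b.1)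
      (fun b => (b.1.2.2, b.2))
      = (∑ w, hfun (lam w)) + ∑ w, lam w * HofMap (fun s => s.2.2) (pr w) :=
    entropy_pairG lam pr hpi1 (fun s => s.2.2)
  have hYZU : entropy (fun b : (𝒳 × 𝒴 × 𝒵) × W' => lam b.2 * pr b.2 b.1)
      (fun b => (b.1.2.1, b.1.2.2, b.2))
      = entropy (fun b : (𝒳 × 𝒴 × 𝒵) × W' => lam b.2 * pr b.2 b.1)
        (fun b => (b.1.2, b.2)) :=
    entropy_comp_inj (fun b : (𝒳 × 𝒴 × 𝒵) × W' => lam b.2 * pr b.2 b.1) (fun b => (b.1.2, b.2))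
      (fun c : (𝒴 × 𝒵) × W' => (c.1.1, c.1.2, c.2)) inj1
  have hYZU2 : entropy (fun b : (𝒳 × 𝒴 × 𝒵) × W' => lam b.2 * pr b.2 b.1)
      (fun b => (b.1.2, b.2))
      = (∑ w, hfun (lam w)) + ∑ w, lam w * HofMap (fun s => s.2) (pr w) :=
    entropy_pairG lam pr hpi1 (fun s => s.2)
  have hU : entropy (fun b : (𝒳 × 𝒴 × 𝒵) × W' => lam b.2 * pr b.2 b.1)
      (fun b => b.2) = ∑ w, hfun (lam w) := entropy_sndG lam pr hpi1
  show entropy (fun b : (𝒳 × 𝒴 × 𝒵) × W' => lam b.2 * pr b.2 b.1)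
        (fun b => (b.1.2.1, b.2))
      + entropy (fun b : (𝒳 × 𝒴 × 𝒵) × W' => lam b.2 * pr b.2 b.1)
        (fun b => (b.1.2.2, b.2))
      - entropy (fun b : (𝒳 × 𝒴 × 𝒵) × W' => lam b.2 * pr b.2 b.1)
        (fun b => (b.1.2.1, b.1.2.2, b.2))
      - entropy (fun b : (𝒳 × 𝒴 × 𝒵) × W' => lam b.2 * pr b.2 b.1)
        (fun b => b.2)
      = ∑ w, lam w * g1 (pr w)
  rw [hYU, hZU, hYZU, hYZU2, hU]
  simp only [g1, mul_add, mul_sub, Finset.sum_add_distrib, Finset.sum_sub_distrib]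
  ring

lemma Q2 (hpi1 : ∀ w, ∑ s, pr w s = 1) :
    mutualInfo (fun b : (𝒳 × 𝒴 × 𝒵) × W' => lam b.2 * pr b.2 b.1)
      (fun b => (b.2, b.1.2.1, b.1.2.2)) (fun b => b.1.1)
    = HofMap (fun s : 𝒳 × 𝒴 × 𝒵 => s.1) (fun s => ∑ w, lam w * pr w s)
      + ∑ w, lam w * g2 (pr w) := by
  have hA : entropy (fun b : (𝒳 × 𝒴 × 𝒵) × W' => lam b.2 * pr b.2 b.1)
      (fun b => (b.2, b.1.2.1, b.1.2.2))
      = entropy (fun b : (𝒳 × 𝒴 × 𝒵) × W' => lam b.2 * pr b.2 b.1)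
        (fun b => (b.1.2, b.2)) :=
    entropy_comp_inj (fun b : (𝒳 × 𝒴 × 𝒵) × W' => lam b.2 * pr b.2 b.1) (fun b => (b.1.2, b.2))
      (fun c : (𝒴 × 𝒵) × W' => (c.2, c.1.1, c.1.2)) inj2
  have hA2 : entropy (fun b : (𝒳 × 𝒴 × 𝒵) × W' => lam b.2 * pr b.2 b.1)
      (fun b => (b.1.2, b.2))
      = (∑ w, hfun (lam w)) + ∑ w, lam w * HofMap (fun s => s.2) (pr w) :=
    entropy_pairG lam pr hpi1 (fun s => s.2)
  have hB : entropy (fun b : (𝒳 × 𝒴 × 𝒵) × W' => lam b.2 * pr b.2 b.1)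
      (fun b => b.1.1)
      = HofMap (fun s : 𝒳 × 𝒴 × 𝒵 => s.1) (fun s => ∑ w, lam w * pr w s) :=
    entropy_fstG lam pr (fun s => s.1)
  have hC : entropy (fun b : (𝒳 × 𝒴 × 𝒵) × W' => lam b.2 * pr b.2 b.1)
      (fun b => ((b.2, b.1.2.1, b.1.2.2), b.1.1))
      = entropy (fun b : (𝒳 × 𝒴 × 𝒵) × W' => lam b.2 * pr b.2 b.1)
        (fun b => b) :=
    entropy_comp_inj (fun b : (𝒳 × 𝒴 × 𝒵) × W' => lam b.2 * pr b.2 b.1) (fun b => b)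
      (fun c : (𝒳 × 𝒴 × 𝒵) × W' => ((c.2, c.1.2.1, c.1.2.2), c.1.1)) inj3
  have hC2 : entropy (fun b : (𝒳 × 𝒴 × 𝒵) × W' => lam b.2 * pr b.2 b.1)
      (fun b => b)
      = (∑ w, hfun (lam w)) + ∑ w, lam w * HofMap (id : 𝒳 × 𝒴 × 𝒵 → 𝒳 × 𝒴 × 𝒵) (pr w) :=
    entropy_pairG lam pr hpi1 id
  show entropy (fun b : (𝒳 × 𝒴 × 𝒵) × W' => lam b.2 * pr b.2 b.1)
        (fun b => (b.2, b.1.2.1, b.1.2.2))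
      + entropy (fun b : (𝒳 × 𝒴 × 𝒵) × W' => lam b.2 * pr b.2 b.1)
        (fun b => b.1.1)
      - entropy (fun b : (𝒳 × 𝒴 × 𝒵) × W' => lam b.2 * pr b.2 b.1)
        (fun b => ((b.2, b.1.2.1, b.1.2.2), b.1.1))
      = _
  rw [hA, hA2, hB, hC, hC2]
  simp only [g2, mul_sub, Finset.sum_sub_distrib]
  ring

lemma Q3 (hpi1 : ∀ w, ∑ s, pr w s = 1) :
    mutualInfo (fun b : (𝒳 × 𝒴 × 𝒵) × W' => lam b.2 * pr b.2 b.1)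
      (fun b => b.2) (fun b => (b.1.1, b.1.2.1, b.1.2.2))
    = HofMap (id : 𝒳 × 𝒴 × 𝒵 → 𝒳 × 𝒴 × 𝒵) (fun s => ∑ w, lam w * pr w s)
      + ∑ w, lam w * g3 (pr w) := by
  have hA : entropy (fun b : (𝒳 × 𝒴 × 𝒵) × W' => lam b.2 * pr b.2 b.1)
      (fun b => b.2) = ∑ w, hfun (lam w) := entropy_sndG lam pr hpi1
  have hB : entropy (fun b : (𝒳 × 𝒴 × 𝒵) × W' => lam b.2 * pr b.2 b.1)
      (fun b => (b.1.1, b.1.2.1, b.1.2.2))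
      = HofMap (id : 𝒳 × 𝒴 × 𝒵 → 𝒳 × 𝒴 × 𝒵) (fun s => ∑ w, lam w * pr w s) :=
    entropy_fstG lam pr id
  have hC : entropy (fun b : (𝒳 × 𝒴 × 𝒵) × W' => lam b.2 * pr b.2 b.1)
      (fun b => (b.2, b.1.1, b.1.2.1, b.1.2.2))
      = entropy (fun b : (𝒳 × 𝒴 × 𝒵) × W' => lam b.2 * pr b.2 b.1)
        (fun b => b) :=
    entropy_comp_inj (fun b : (𝒳 × 𝒴 × 𝒵) × W' => lam b.2 * pr b.2 b.1) (fun b => b)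
      (fun c : (𝒳 × 𝒴 × 𝒵) × W' => (c.2, c.1.1, c.1.2.1, c.1.2.2)) inj4
  have hC2 : entropy (fun b : (𝒳 × 𝒴 × 𝒵) × W' => lam b.2 * pr b.2 b.1)
      (fun b => b)
      = (∑ w, hfun (lam w)) + ∑ w, lam w * HofMap (id : 𝒳 × 𝒴 × 𝒵 → 𝒳 × 𝒴 × 𝒵) (pr w) :=
    entropy_pairG lam pr hpi1 id
  show entropy (fun b : (𝒳 × 𝒴 × 𝒵) × W' => lam b.2 * pr b.2 b.1)
        (fun b => b.2)
      + entropy (fun b : (𝒳 × 𝒴 × 𝒵) × W' => lam b.2 * pr b.2 b.1)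
        (fun b => (b.1.1, b.1.2.1, b.1.2.2))
      - entropy (fun b : (𝒳 × 𝒴 × 𝒵) × W' => lam b.2 * pr b.2 b.1)
        (fun b => (b.2, b.1.1, b.1.2.1, b.1.2.2))
      = _
  rw [hA, hB, hC, hC2]
  simp only [g3, mul_neg, Finset.sum_neg_distrib]
  ring

end QLemmas
section Caratheodory

open FiniteDimensional Module

lemma caratheodory_step {S : Type*} [Fintype S] [DecidableEq S] [Nonempty S]
    {W' : Type*} [Fintype W'] (lam : W' → ℝ) (pr : W' → S → ℝ) (f : (S → ℝ) → Fin 3 → ℝ)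
    (hlam0 : ∀ w, 0 ≤ lam w) (hlam1 : ∑ w, lam w = 1)
    (hpi0 : ∀ w s, 0 ≤ pr w s) (hpi1 : ∀ w, ∑ s, pr w s = 1) :
    ∃ m : ℕ, m ≤ Fintype.card S + 3 ∧ ∃ (lam' : Fin m → ℝ) (pr' : Fin m → S → ℝ),
      (∀ u, 0 ≤ lam' u) ∧ (∑ u, lam' u = 1) ∧ (∀ u s, 0 ≤ pr' u s) ∧
      (∀ u, ∑ s, pr' u s = 1) ∧
      (∀ s, ∑ u, lam' u * pr' u s = ∑ w, lam w * pr w s) ∧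
      (∀ j, ∑ u, lam' u * f (pr' u) j = ∑ w, lam w * f (pr w) j) := by
  classical
  let E := (S ⊕ Fin 3) → ℝ
  let Φ : (S → ℝ) → E := fun ρ => Sum.elim ρ (f ρ)
  let P : E := ∑ w, lam w • Φ (pr w)
  have hP : P ∈ convexHull ℝ (Set.range fun w => Φ (pr w)) := by
    have h1 : Finset.univ.centerMass lam (fun w => Φ (pr w))
        ∈ convexHull ℝ (Set.range fun w => Φ (pr w)) :=
      Finset.centerMass_mem_convexHull _ (fun w _ => hlam0 w) (by rw [hlam1]; norm_num)
        (fun w _ => Set.mem_range_self w)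
    rwa [Finset.centerMass_eq_of_sum_1 _ _ hlam1] at h1
  obtain ⟨ι, hfin, z, wt, hrange, haff, hpos, hsum, hrepr⟩ :=
    eq_pos_convex_span_of_mem_convexHull hP
  -- the linear functional summing the S-coordinates
  let L : E →ₗ[ℝ] ℝ := ∑ s : S, LinearMap.proj (R := ℝ) (φ := fun _ : S ⊕ Fin 3 => ℝ) (Sum.inl s)
  have hLapp : ∀ v : E, L v = ∑ s, v (Sum.inl s) := by
    intro v
    simp only [L, LinearMap.sum_apply, LinearMap.proj_apply]
    exact Finset.sum_congr rfl fun s _ => rfl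
  have hL1 : ∀ x ∈ Set.range z, L x = 1 := by
    rintro x hx
    obtain ⟨w, rfl⟩ := hrange hx
    rw [hLapp]
    simpa [Φ] using hpi1 w
  have hLsurj : Function.Surjective L := by
    intro c
    refine ⟨fun i => if i = Sum.inl (Classical.arbitrary S) then c else 0, ?_⟩
    rw [hLapp]
    simp
  have hker : finrank ℝ (LinearMap.ker L) + 1 = Fintype.card S + 3 := by
    have h1 := LinearMap.finrank_range_add_finrank_ker L
    rw [LinearMap.range_eq_top.2 hLsurj, finrank_top] at h1
    have h2 : finrank ℝ E = Fintype.card S + 3 := by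
      rw [Module.finrank_pi]
      simp
    rw [h2] at h1
    simp only [Module.finrank_self] at h1
    omega
  have hsub : vectorSpan ℝ (Set.range z) ≤ LinearMap.ker L := by
    rw [vectorSpan_def, Submodule.span_le]
    rintro v hv
    obtain ⟨a, ha, b, hb, rfl⟩ := Set.mem_vsub.1 hv
    simp only [SetLike.mem_coe, LinearMap.mem_ker, vsub_eq_sub, map_sub]
    rw [hL1 a ha, hL1 b hb, sub_self]
  have hcard : Fintype.card ι ≤ Fintype.card S + 3 := by
    rcases isEmpty_or_nonempty ι with h | h
    · haveI := h
      rw [Fintype.card_eq_zero]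
      exact Nat.zero_le _
    · haveI := h
      have h1 : finrank ℝ (vectorSpan ℝ (Set.range z)) + 1 = Fintype.card ι :=
        haff.finrank_vectorSpan_add_one
      have h2 : finrank ℝ (vectorSpan ℝ (Set.range z)) ≤ finrank ℝ (LinearMap.ker L) :=
        Submodule.finrank_mono hsub
      omega
  let e := Fintype.equivFin ι
  refine ⟨Fintype.card ι, hcard, fun u => wt (e.symm u),
    fun u s => z (e.symm u) (Sum.inl s), fun u => (hpos _).le, ?_, ?_, ?_, ?_, ?_⟩
  · rw [Equiv.sum_comp e.symm wt]
    exact hsum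
  · intro u s
    obtain ⟨w, hw⟩ := hrange (Set.mem_range_self (e.symm u))
    show 0 ≤ z (e.symm u) (Sum.inl s)
    rw [← hw]
    exact hpi0 w s
  · intro u
    obtain ⟨w, hw⟩ := hrange (Set.mem_range_self (e.symm u))
    show ∑ s, z (e.symm u) (Sum.inl s) = 1
    calc ∑ s, z (e.symm u) (Sum.inl s) = ∑ s, pr w s :=
          Finset.sum_congr rfl fun s _ => by rw [← hw]; rfl
      _ = 1 := hpi1 w
  · intro s
    have h1 : ∑ u, wt (e.symm u) * z (e.symm u) (Sum.inl s)
        = ∑ i, wt i * z i (Sum.inl s) :=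
      Equiv.sum_comp e.symm (fun i => wt i * z i (Sum.inl s))
    have h2 : (∑ i, wt i • z i) (Sum.inl s) = ∑ i, wt i * z i (Sum.inl s) := by
      rw [Finset.sum_apply]
      rfl
    have h3 : P (Sum.inl s) = ∑ w, lam w * pr w s := by
      show (∑ w, lam w • Φ (pr w)) (Sum.inl s) = _
      rw [Finset.sum_apply]
      exact Finset.sum_congr rfl fun w _ => rfl
    have h4 : (∑ i, wt i • z i) (Sum.inl s) = P (Sum.inl s) := by rw [hrepr]
    show ∑ u, wt (e.symm u) * z (e.symm u) (Sum.inl s) = ∑ w, lam w * pr w s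
    rw [h1, ← h2, h4, h3]
  · intro j
    have key : ∀ u : Fin (Fintype.card ι),
        f (fun s => z (e.symm u) (Sum.inl s)) j = z (e.symm u) (Sum.inr j) := by
      intro u
      obtain ⟨w, hw⟩ := hrange (Set.mem_range_self (e.symm u))
      rw [← hw]
      show f (fun s => Φ (pr w) (Sum.inl s)) j = f (pr w) j
      rfl
    have h1 : ∑ u, wt (e.symm u) * z (e.symm u) (Sum.inr j)
        = ∑ i, wt i * z i (Sum.inr j) :=
      Equiv.sum_comp e.symm (fun i => wt i * z i (Sum.inr j))
    have h2 : (∑ i, wt i • z i) (Sum.inr j) = ∑ i, wt i * z i (Sum.inr j) := by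
      rw [Finset.sum_apply]
      rfl
    have h3 : P (Sum.inr j) = ∑ w, lam w * f (pr w) j := by
      show (∑ w, lam w • Φ (pr w)) (Sum.inr j) = _
      rw [Finset.sum_apply]
      exact Finset.sum_congr rfl fun w _ => rfl
    have h4 : (∑ i, wt i • z i) (Sum.inr j) = P (Sum.inr j) := by rw [hrepr]
    calc ∑ u, wt (e.symm u) * f (fun s => z (e.symm u) (Sum.inl s)) j
        = ∑ u, wt (e.symm u) * z (e.symm u) (Sum.inr j) :=
          Finset.sum_congr rfl fun u _ => by rw [key u]
      _ = ∑ i, wt i * z i (Sum.inr j) := h1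
      _ = P (Sum.inr j) := by rw [← h2, h4]
      _ = ∑ w, lam w * f (pr w) j := h3

end Caratheodory
section Transport

def reassoc (𝒳 𝒴 𝒵 W' : Type*) : ((𝒳 × 𝒴 × 𝒵) × W') ≃ (𝒳 × 𝒴 × 𝒵 × W') where
  toFun b := (b.1.1, b.1.2.1, b.1.2.2, b.2)
  invFun a := ((a.1, a.2.1, a.2.2.1), a.2.2.2)
  left_inv b := rfl
  right_inv a := rfl

variable {𝒳 𝒴 𝒵 W' : Type*} [Fintype 𝒳] [Fintype 𝒴] [Fintype 𝒵] [Fintype W']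
  [DecidableEq 𝒳] [DecidableEq 𝒴] [DecidableEq 𝒵] [DecidableEq W']

lemma probOf_transport (μ : 𝒳 × 𝒴 × 𝒵 × W' → ℝ) (t : 𝒳 × 𝒴 × 𝒵) :
    probOf μ (fun a => (a.1, a.2.1, a.2.2.1)) t
      = probOf (fun b : (𝒳 × 𝒴 × 𝒵) × W' => μ (b.1.1, b.1.2.1, b.1.2.2, b.2))
        (fun b => b.1) t :=
  (probOf_comp_equiv (reassoc 𝒳 𝒴 𝒵 W') μ (fun a => (a.1, a.2.1, a.2.2.1)) t).symm

lemma condMutualInfo_transport (μ : 𝒳 × 𝒴 × 𝒵 × W' → ℝ) :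
    condMutualInfo μ (fun a => a.2.1) (fun a => a.2.2.1) (fun a => a.2.2.2)
      = condMutualInfo (fun b : (𝒳 × 𝒴 × 𝒵) × W' => μ (b.1.1, b.1.2.1, b.1.2.2, b.2))
        (fun b => b.1.2.1) (fun b => b.1.2.2) (fun b => b.2) := by
  have h1 : entropy (fun b : (𝒳 × 𝒴 × 𝒵) × W' => μ (b.1.1, b.1.2.1, b.1.2.2, b.2))
      (fun b => (b.1.2.1, b.2)) = entropy μ (fun a => (a.2.1, a.2.2.2)) :=
    entropy_comp_equiv (reassoc 𝒳 𝒴 𝒵 W') μ (fun a => (a.2.1, a.2.2.2))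
  have h2 : entropy (fun b : (𝒳 × 𝒴 × 𝒵) × W' => μ (b.1.1, b.1.2.1, b.1.2.2, b.2))
      (fun b => (b.1.2.2, b.2)) = entropy μ (fun a => (a.2.2.1, a.2.2.2)) :=
    entropy_comp_equiv (reassoc 𝒳 𝒴 𝒵 W') μ (fun a => (a.2.2.1, a.2.2.2))
  have h3 : entropy (fun b : (𝒳 × 𝒴 × 𝒵) × W' => μ (b.1.1, b.1.2.1, b.1.2.2, b.2))
      (fun b => (b.1.2.1, b.1.2.2, b.2)) = entropy μ (fun a => (a.2.1, a.2.2.1, a.2.2.2)) :=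
    entropy_comp_equiv (reassoc 𝒳 𝒴 𝒵 W') μ (fun a => (a.2.1, a.2.2.1, a.2.2.2))
  have h4 : entropy (fun b : (𝒳 × 𝒴 × 𝒵) × W' => μ (b.1.1, b.1.2.1, b.1.2.2, b.2))
      (fun b => b.2) = entropy μ (fun a => a.2.2.2) :=
    entropy_comp_equiv (reassoc 𝒳 𝒴 𝒵 W') μ (fun a => a.2.2.2)
  simp only [condMutualInfo]
  rw [h1, h2, h3, h4]

lemma mutualInfo_transportA (μ : 𝒳 × 𝒴 × 𝒵 × W' → ℝ) :
    mutualInfo μ (fun a => (a.2.2.2, a.2.1, a.2.2.1)) (fun a => a.1)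
      = mutualInfo (fun b : (𝒳 × 𝒴 × 𝒵) × W' => μ (b.1.1, b.1.2.1, b.1.2.2, b.2))
        (fun b => (b.2, b.1.2.1, b.1.2.2)) (fun b => b.1.1) := by
  have h1 : entropy (fun b : (𝒳 × 𝒴 × 𝒵) × W' => μ (b.1.1, b.1.2.1, b.1.2.2, b.2))
      (fun b => (b.2, b.1.2.1, b.1.2.2)) = entropy μ (fun a => (a.2.2.2, a.2.1, a.2.2.1)) :=
    entropy_comp_equiv (reassoc 𝒳 𝒴 𝒵 W') μ (fun a => (a.2.2.2, a.2.1, a.2.2.1))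
  have h2 : entropy (fun b : (𝒳 × 𝒴 × 𝒵) × W' => μ (b.1.1, b.1.2.1, b.1.2.2, b.2))
      (fun b => b.1.1) = entropy μ (fun a => a.1) :=
    entropy_comp_equiv (reassoc 𝒳 𝒴 𝒵 W') μ (fun a => a.1)
  have h3 : entropy (fun b : (𝒳 × 𝒴 × 𝒵) × W' => μ (b.1.1, b.1.2.1, b.1.2.2, b.2))
      (fun b => ((b.2, b.1.2.1, b.1.2.2), b.1.1))
      = entropy μ (fun a => ((a.2.2.2, a.2.1, a.2.2.1), a.1)) :=
    entropy_comp_equiv (reassoc 𝒳 𝒴 𝒵 W') μ (fun a => ((a.2.2.2, a.2.1, a.2.2.1), a.1))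
  simp only [mutualInfo]
  rw [h1, h2, h3]

lemma mutualInfo_transportB (μ : 𝒳 × 𝒴 × 𝒵 × W' → ℝ) :
    mutualInfo μ (fun a => a.2.2.2) (fun a => (a.1, a.2.1, a.2.2.1))
      = mutualInfo (fun b : (𝒳 × 𝒴 × 𝒵) × W' => μ (b.1.1, b.1.2.1, b.1.2.2, b.2))
        (fun b => b.2) (fun b => (b.1.1, b.1.2.1, b.1.2.2)) := by
  have h1 : entropy (fun b : (𝒳 × 𝒴 × 𝒵) × W' => μ (b.1.1, b.1.2.1, b.1.2.2, b.2))
      (fun b => b.2) = entropy μ (fun a => a.2.2.2) :=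
    entropy_comp_equiv (reassoc 𝒳 𝒴 𝒵 W') μ (fun a => a.2.2.2)
  have h2 : entropy (fun b : (𝒳 × 𝒴 × 𝒵) × W' => μ (b.1.1, b.1.2.1, b.1.2.2, b.2))
      (fun b => (b.1.1, b.1.2.1, b.1.2.2)) = entropy μ (fun a => (a.1, a.2.1, a.2.2.1)) :=
    entropy_comp_equiv (reassoc 𝒳 𝒴 𝒵 W') μ (fun a => (a.1, a.2.1, a.2.2.1))
  have h3 : entropy (fun b : (𝒳 × 𝒴 × 𝒵) × W' => μ (b.1.1, b.1.2.1, b.1.2.2, b.2))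
      (fun b => (b.2, b.1.1, b.1.2.1, b.1.2.2))
      = entropy μ (fun a => (a.2.2.2, a.1, a.2.1, a.2.2.1)) :=
    entropy_comp_equiv (reassoc 𝒳 𝒴 𝒵 W') μ (fun a => (a.2.2.2, a.1, a.2.1, a.2.2.1))
  simp only [mutualInfo]
  rw [h1, h2, h3]

end Transport

section MargLemma

variable {S W' T : Type*} [Fintype S] [Fintype W'] [DecidableEq S] [DecidableEq W']

lemma probOf_fstv (lam : W' → ℝ) (pr : W' → S → ℝ) (t : S) :
    probOf (fun b : S × W' => lam b.2 * pr b.2 b.1) (fun b => b.1) t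
      = ∑ w, lam w * pr w t := by
  unfold probOf
  rw [Fintype.sum_prod_type, Finset.sum_comm]
  refine Finset.sum_congr rfl fun w _ => ?_
  simp

end MargLemma

section CondDist

variable {𝒳 𝒴 𝒵 𝒲 : Type*} [Fintype 𝒳] [Fintype 𝒴] [Fintype 𝒵] [Fintype 𝒲]

noncomputable def lamOf (p : 𝒳 × 𝒴 × 𝒵 × 𝒲 → ℝ) (w : 𝒲) : ℝ :=
  ∑ s : 𝒳 × 𝒴 × 𝒵, p (s.1, s.2.1, s.2.2, w)

noncomputable def prOf [DecidableEq 𝒳] [DecidableEq 𝒴] [DecidableEq 𝒵]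
    (p : 𝒳 × 𝒴 × 𝒵 × 𝒲 → ℝ) (s₀ : 𝒳 × 𝒴 × 𝒵) (w : 𝒲) (s : 𝒳 × 𝒴 × 𝒵) : ℝ :=
  if lamOf p w = 0 then (if s = s₀ then 1 else 0) else p (s.1, s.2.1, s.2.2, w) / lamOf p w

variable [DecidableEq 𝒳] [DecidableEq 𝒴] [DecidableEq 𝒵]
  (p : 𝒳 × 𝒴 × 𝒵 × 𝒲 → ℝ) (s₀ : 𝒳 × 𝒴 × 𝒵)

lemma lamOf_nonneg (hp : IsPMF p) (w : 𝒲) : 0 ≤ lamOf p w :=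
  Finset.sum_nonneg fun s _ => hp.1 _

lemma lamOf_sum_one (hp : IsPMF p) : ∑ w, lamOf p w = 1 := by
  unfold lamOf
  rw [Finset.sum_comm]
  have h := Equiv.sum_comp (reassoc 𝒳 𝒴 𝒵 𝒲) p
  rw [Fintype.sum_prod_type] at h
  rw [← hp.2, ← h]
  rfl

lemma prOf_nonneg (hp : IsPMF p) (w : 𝒲) (s : 𝒳 × 𝒴 × 𝒵) : 0 ≤ prOf p s₀ w s := by
  unfold prOf
  by_cases h : lamOf p w = 0
  · rw [if_pos h]
    split <;> norm_num
  · rw [if_neg h]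
    exact div_nonneg (hp.1 _) (lamOf_nonneg p hp w)

lemma prOf_sum_one (hp : IsPMF p) (w : 𝒲) : ∑ s, prOf p s₀ w s = 1 := by
  unfold prOf
  by_cases h : lamOf p w = 0
  · simp only [if_pos h]
    rw [Finset.sum_ite_eq' Finset.univ s₀ (fun _ => (1 : ℝ))]
    simp
  · simp only [if_neg h]
    rw [← Finset.sum_div]
    show lamOf p w / lamOf p w = 1
    exact div_self h

lemma factP (hp : IsPMF p) (b : (𝒳 × 𝒴 × 𝒵) × 𝒲) :
    p (b.1.1, b.1.2.1, b.1.2.2, b.2) = lamOf p b.2 * prOf p s₀ b.2 b.1 := by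
  unfold prOf
  by_cases h : lamOf p b.2 = 0
  · rw [h, zero_mul]
    have h0 := (Finset.sum_eq_zero_iff_of_nonneg
      (fun s _ => hp.1 (s.1, s.2.1, s.2.2, b.2))).1 h b.1 (Finset.mem_univ _)
    exact h0
  · rw [if_neg h, mul_div_cancel₀ _ h]

end CondDist

/-- Cardinality bound via Carathéodory: the auxiliary W can be replaced by U with
|U| ≤ |X||Y||Z| + 3 preserving the (X,Y,Z)-marginal and three information quantities. -/
theorem cardinality_bound {𝒳 𝒴 𝒵 𝒲 : Type*}
    [Fintype 𝒳] [Fintype 𝒴] [Fintype 𝒵] [Fintype 𝒲]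
    [DecidableEq 𝒳] [DecidableEq 𝒴] [DecidableEq 𝒵] [DecidableEq 𝒲]
    (p : 𝒳 × 𝒴 × 𝒵 × 𝒲 → ℝ) (hp : IsPMF p) :
    ∃ m : ℕ, m ≤ Fintype.card 𝒳 * Fintype.card 𝒴 * Fintype.card 𝒵 + 3 ∧
    ∃ q : 𝒳 × 𝒴 × 𝒵 × Fin m → ℝ, IsPMF q ∧
      (∀ t : 𝒳 × 𝒴 × 𝒵,
        probOf q (fun a => (a.1, a.2.1, a.2.2.1)) t = probOf p (fun a => (a.1, a.2.1, a.2.2.1)) t) ∧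
      condMutualInfo q (fun a => a.2.1) (fun a => a.2.2.1) (fun a => a.2.2.2) =
        condMutualInfo p (fun a => a.2.1) (fun a => a.2.2.1) (fun a => a.2.2.2) ∧
      mutualInfo q (fun a => (a.2.2.2, a.2.1, a.2.2.1)) (fun a => a.1) =
        mutualInfo p (fun a => (a.2.2.2, a.2.1, a.2.2.1)) (fun a => a.1) ∧
      mutualInfo q (fun a => a.2.2.2) (fun a => (a.1, a.2.1, a.2.2.1)) =
        mutualInfo p (fun a => a.2.2.2) (fun a => (a.1, a.2.1, a.2.2.1)) := by 
  classical
  have hne : Nonempty (𝒳 × 𝒴 × 𝒵 × 𝒲) := by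
    by_contra h
    rw [not_nonempty_iff] at h
    have h2 := hp.2
    rw [Finset.univ_eq_empty, Finset.sum_empty] at h2
    exact one_ne_zero h2.symm
  obtain ⟨⟨x₀, y₀, z₀, w₀⟩⟩ := hne
  haveI : Nonempty (𝒳 × 𝒴 × 𝒵) := ⟨(x₀, y₀, z₀)⟩
  obtain ⟨m, hm, lam', pr', hl0, hl1, hq0, hq1, hmarg, hfv⟩ :=
    caratheodory_step (lamOf p) (prOf p (x₀, y₀, z₀)) (fun ρ => ![g1 ρ, g2 ρ, g3 ρ])
      (lamOf_nonneg p hp) (lamOf_sum_one p hp)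
      (prOf_nonneg p (x₀, y₀, z₀) hp) (prOf_sum_one p (x₀, y₀, z₀) hp)
  have hrwP : (fun b : (𝒳 × 𝒴 × 𝒵) × 𝒲 => p (b.1.1, b.1.2.1, b.1.2.2, b.2))
      = fun b => lamOf p b.2 * prOf p (x₀, y₀, z₀) b.2 b.1 :=
    funext (factP p (x₀, y₀, z₀) hp)
  have hmargfun : (fun s : 𝒳 × 𝒴 × 𝒵 => ∑ u, lam' u * pr' u s)
      = fun s => ∑ w, lamOf p w * prOf p (x₀, y₀, z₀) w s := funext hmarg
  refine ⟨m, ?_, fun a => lam' a.2.2.2 * pr' a.2.2.2 (a.1, a.2.1, a.2.2.1),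
    ⟨fun a => mul_nonneg (hl0 _) (hq0 _ _), ?_⟩, ?_, ?_, ?_, ?_⟩
  · calc m ≤ Fintype.card (𝒳 × 𝒴 × 𝒵) + 3 := hm
      _ = Fintype.card 𝒳 * Fintype.card 𝒴 * Fintype.card 𝒵 + 3 := by
          simp [Fintype.card_prod, mul_assoc]
  · -- sum of q is 1
    calc (∑ a : 𝒳 × 𝒴 × 𝒵 × Fin m, lam' a.2.2.2 * pr' a.2.2.2 (a.1, a.2.1, a.2.2.1))
        = ∑ b : (𝒳 × 𝒴 × 𝒵) × Fin m, lam' b.2 * pr' b.2 b.1 :=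
          (Equiv.sum_comp (reassoc 𝒳 𝒴 𝒵 (Fin m))
            (fun a => lam' a.2.2.2 * pr' a.2.2.2 (a.1, a.2.1, a.2.2.1))).symm
      _ = ∑ u, ∑ s : 𝒳 × 𝒴 × 𝒵, lam' u * pr' u s := by
          rw [Fintype.sum_prod_type, Finset.sum_comm]
      _ = ∑ u, lam' u := by
          refine Finset.sum_congr rfl fun u _ => ?_
          rw [← Finset.mul_sum, hq1 u, mul_one]
      _ = 1 := hl1
  · -- marginal
    intro t
    calc probOf (fun a : 𝒳 × 𝒴 × 𝒵 × Fin m => lam' a.2.2.2 * pr' a.2.2.2 (a.1, a.2.1, a.2.2.1))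
          (fun a => (a.1, a.2.1, a.2.2.1)) t
        = probOf (fun b : (𝒳 × 𝒴 × 𝒵) × Fin m => lam' b.2 * pr' b.2 b.1) (fun b => b.1) t :=
          probOf_transport _ t
      _ = ∑ u, lam' u * pr' u t := probOf_fstv lam' pr' t
      _ = ∑ w, lamOf p w * prOf p (x₀, y₀, z₀) w t := hmarg t
      _ = probOf (fun b : (𝒳 × 𝒴 × 𝒵) × 𝒲 => lamOf p b.2 * prOf p (x₀, y₀, z₀) b.2 b.1)
            (fun b => b.1) t := (probOf_fstv (lamOf p) (prOf p (x₀, y₀, z₀)) t).symm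
      _ = probOf p (fun a => (a.1, a.2.1, a.2.2.1)) t := by
          rw [← hrwP]
          exact (probOf_transport p t).symm
  · -- conditional mutual information
    calc condMutualInfo (fun a : 𝒳 × 𝒴 × 𝒵 × Fin m => lam' a.2.2.2 * pr' a.2.2.2 (a.1, a.2.1, a.2.2.1))
          (fun a => a.2.1) (fun a => a.2.2.1) (fun a => a.2.2.2)
        = condMutualInfo (fun b : (𝒳 × 𝒴 × 𝒵) × Fin m => lam' b.2 * pr' b.2 b.1)
            (fun b => b.1.2.1) (fun b => b.1.2.2) (fun b => b.2) := condMutualInfo_transport _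
      _ = ∑ u, lam' u * g1 (pr' u) := Q1 lam' pr' hq1
      _ = ∑ w, lamOf p w * g1 (prOf p (x₀, y₀, z₀) w) := by
          have h := hfv 0
          simpa using h
      _ = condMutualInfo (fun b : (𝒳 × 𝒴 × 𝒵) × 𝒲 =>
            lamOf p b.2 * prOf p (x₀, y₀, z₀) b.2 b.1)
            (fun b => b.1.2.1) (fun b => b.1.2.2) (fun b => b.2) :=
          (Q1 (lamOf p) (prOf p (x₀, y₀, z₀)) (prOf_sum_one p (x₀, y₀, z₀) hp)).symm
      _ = condMutualInfo p (fun a => a.2.1) (fun a => a.2.2.1) (fun a => a.2.2.2) := by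
          rw [← hrwP]
          exact (condMutualInfo_transport p).symm
  · -- mutual information A
    calc mutualInfo (fun a : 𝒳 × 𝒴 × 𝒵 × Fin m => lam' a.2.2.2 * pr' a.2.2.2 (a.1, a.2.1, a.2.2.1))
          (fun a => (a.2.2.2, a.2.1, a.2.2.1)) (fun a => a.1)
        = mutualInfo (fun b : (𝒳 × 𝒴 × 𝒵) × Fin m => lam' b.2 * pr' b.2 b.1)
            (fun b => (b.2, b.1.2.1, b.1.2.2)) (fun b => b.1.1) := mutualInfo_transportA _
      _ = HofMap (fun s : 𝒳 × 𝒴 × 𝒵 => s.1) (fun s => ∑ u, lam' u * pr' u s)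
            + ∑ u, lam' u * g2 (pr' u) := Q2 lam' pr' hq1
      _ = HofMap (fun s : 𝒳 × 𝒴 × 𝒵 => s.1)
            (fun s => ∑ w, lamOf p w * prOf p (x₀, y₀, z₀) w s)
            + ∑ w, lamOf p w * g2 (prOf p (x₀, y₀, z₀) w) := by
          rw [hmargfun]
          congr 1
          have h := hfv 1
          simpa using h
      _ = mutualInfo (fun b : (𝒳 × 𝒴 × 𝒵) × 𝒲 =>
            lamOf p b.2 * prOf p (x₀, y₀, z₀) b.2 b.1)
            (fun b => (b.2, b.1.2.1, b.1.2.2)) (fun b => b.1.1) :=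
          (Q2 (lamOf p) (prOf p (x₀, y₀, z₀)) (prOf_sum_one p (x₀, y₀, z₀) hp)).symm
      _ = mutualInfo p (fun a => (a.2.2.2, a.2.1, a.2.2.1)) (fun a => a.1) := by
          rw [← hrwP]
          exact (mutualInfo_transportA p).symm
  · -- mutual information B
    calc mutualInfo (fun a : 𝒳 × 𝒴 × 𝒵 × Fin m => lam' a.2.2.2 * pr' a.2.2.2 (a.1, a.2.1, a.2.2.1))
          (fun a => a.2.2.2) (fun a => (a.1, a.2.1, a.2.2.1))
        = mutualInfo (fun b : (𝒳 × 𝒴 × 𝒵) × Fin m => lam' b.2 * pr' b.2 b.1)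
            (fun b => b.2) (fun b => (b.1.1, b.1.2.1, b.1.2.2)) := mutualInfo_transportB _
      _ = HofMap (id : 𝒳 × 𝒴 × 𝒵 → 𝒳 × 𝒴 × 𝒵) (fun s => ∑ u, lam' u * pr' u s)
            + ∑ u, lam' u * g3 (pr' u) := Q3 lam' pr' hq1
      _ = HofMap (id : 𝒳 × 𝒴 × 𝒵 → 𝒳 × 𝒴 × 𝒵)
            (fun s => ∑ w, lamOf p w * prOf p (x₀, y₀, z₀) w s)
            + ∑ w, lamOf p w * g3 (prOf p (x₀, y₀, z₀) w) := by
          rw [hmargfun]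
          congr 1
          have h := hfv 2
          simpa using h
      _ = mutualInfo (fun b : (𝒳 × 𝒴 × 𝒵) × 𝒲 =>
            lamOf p b.2 * prOf p (x₀, y₀, z₀) b.2 b.1)
            (fun b => b.2) (fun b => (b.1.1, b.1.2.1, b.1.2.2)) :=
          (Q3 (lamOf p) (prOf p (x₀, y₀, z₀)) (prOf_sum_one p (x₀, y₀, z₀) hp)).symm
      _ = mutualInfo p (fun a => a.2.2.2) (fun a => (a.1, a.2.1, a.2.2.1)) := by
          rw [← hrwP]
          exact (mutualInfo_transportB p).symm
end

section
/- For finite random variables M, X^n, Y^n, Z^n: H(M) ≥ Σ_{i=1}^n [ I(M,Y^{i-1},Z^{i-1};X_i,Y_i,Z_i) − 2 I(X^{i-1},Y^{i-1},Z^{i-1};X_i,Y_i,Z_i) ]. -/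
/-!
Write `Wᵢ = (Xᵢ, Yᵢ, Zᵢ)` and `W^{<i}` for the past. Since `(M, Y^{<i}, Z^{<i})` is a function of
`(M, W^{<i})`, data processing bounds the `i`-th summand by
`I(M, W^{<i}; Wᵢ) - I(W^{<i}; Wᵢ) = I(M; Wᵢ | W^{<i})` (one copy of `I(W^{<i}; Wᵢ) ≥ 0` is simply
dropped), and these conditional informations telescope to `I(M; Wⁿ) ≤ H(M)`.
The only information inequality used is `I(X; Y | Z) ≥ 0`, which is Gibbs' inequality comparing the
joint law of `(X, Y, Z)` with `p(x, z) p(y, z) / p(z)`.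
-/

open scoped BigOperators

open Finset Real

theorem one_sub_div_le_log_sub_log {x y : ℝ} (hx : 0 < x) (hy : 0 < y) :
    1 - y / x ≤ log x - log y := by
  simpa [log_div hx.ne' hy.ne'] using one_sub_inv_le_log_of_pos (div_pos hx hy)

def IsFunctionOf {Ω S T : Type*} (Y : Ω → T) (X : Ω → S) : Prop :=
  ∀ ω ω', X ω = X ω' → Y ω = Y ω'

section Probability

variable {Ω S : Type*} [Fintype Ω] [DecidableEq S] {μ : Ω → ℝ}

theorem probOf_nonneg (hμ : ∀ ω, 0 ≤ μ ω) (X : Ω → S) (s : S) : 0 ≤ probOf μ X s :=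
  sum_nonneg fun ω _ => by split_ifs <;> simp [hμ ω]

theorem le_probOf_apply (hμ : ∀ ω, 0 ≤ μ ω) (X : Ω → S) (ω : Ω) : μ ω ≤ probOf μ X (X ω) := by
  have h := single_le_sum (f := fun ω' => if X ω' = X ω then μ ω' else 0)
    (fun ω' _ => by split_ifs <;> simp [hμ ω']) (mem_univ ω)
  rwa [if_pos rfl] at h

theorem probOf_apply_le_of_isFunctionOf {T : Type*} [DecidableEq T] (hμ : ∀ ω, 0 ≤ μ ω)
    {X : Ω → S} {Y : Ω → T} (h : IsFunctionOf Y X) (ω : Ω) :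
    probOf μ X (X ω) ≤ probOf μ Y (Y ω) :=
  sum_le_sum fun ω' _ => by
    by_cases hX : X ω' = X ω
    · simp [hX, h ω' ω hX]
    · rw [if_neg hX]; split_ifs <;> simp [hμ ω']

theorem sum_probOf_mul [Fintype S] (X : Ω → S) (g : S → ℝ) :
    ∑ s, probOf μ X s * g s = ∑ ω, μ ω * g (X ω) := by
  simp only [probOf, sum_mul, ite_mul, zero_mul]
  rw [sum_comm]
  simp

theorem sum_probOf [Fintype S] (hμ : IsPMF μ) (X : Ω → S) : ∑ s, probOf μ X s = 1 := by
  simpa [hμ.2] using sum_probOf_mul (μ := μ) X 1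

theorem sum_probOf_pair_left {T : Type*} [Fintype S] [DecidableEq T] (X : Ω → S) (Y : Ω → T)
    (t : T) : ∑ s, probOf μ (fun ω => (X ω, Y ω)) (s, t) = probOf μ Y t := by
  simp only [probOf, Prod.mk.injEq]
  rw [sum_comm]
  refine sum_congr rfl fun ω _ => ?_
  simp [ite_and]

theorem sum_mul_div_probOf_le [Fintype S] (V : Ω → S) {g : S → ℝ} (hg : ∀ v, 0 ≤ g v) :
    ∑ ω, μ ω * (g (V ω) / probOf μ V (V ω)) ≤ ∑ v, g v := by
  rw [← sum_probOf_mul V (fun v => g v / probOf μ V v)]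
  refine sum_le_sum fun v _ => ?_
  by_cases h : probOf μ V v = 0
  · simp [h, hg v]
  · rw [mul_div_cancel₀ _ h]

theorem entropy_eq_sum_mul_log [Fintype S] (X : Ω → S) :
    entropy μ X = -(∑ ω, μ ω * log (probOf μ X (X ω))) / log 2 := by
  rw [entropy, ← sum_probOf_mul X (fun s => log (probOf μ X s))]
  simp only [logb, neg_div, Finset.sum_div, ← sum_neg_distrib, mul_div_assoc]

end Probability

section Partition

variable {Ω S T : Type*} [Fintype Ω] [Fintype S] [Fintype T] [DecidableEq S] [DecidableEq T]
  {μ : Ω → ℝ} {X : Ω → S} {Y : Ω → T}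

theorem entropy_le_of_isFunctionOf (hμ : ∀ ω, 0 ≤ μ ω) (h : IsFunctionOf Y X) :
    entropy μ Y ≤ entropy μ X := by
  rw [entropy_eq_sum_mul_log, entropy_eq_sum_mul_log]
  refine div_le_div_of_nonneg_right (neg_le_neg (sum_le_sum fun ω _ => ?_))
    (log_nonneg one_le_two)
  rcases (hμ ω).eq_or_lt with h0 | hpos
  · simp [← h0]
  · exact mul_le_mul_of_nonneg_left (log_le_log (hpos.trans_le (le_probOf_apply hμ X ω))
      (probOf_apply_le_of_isFunctionOf hμ h ω)) hpos.le

theorem entropy_congr_of_eq_iff (h : ∀ ω ω', X ω = X ω' ↔ Y ω = Y ω') :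
    entropy μ X = entropy μ Y := by
  simp only [entropy_eq_sum_mul_log, probOf, h]

theorem entropy_eq_zero_of_forall_eq (hμ : IsPMF μ) (h : ∀ ω ω', X ω = X ω') :
    entropy μ X = 0 := by
  have h1 : ∀ ω, probOf μ X (X ω) = 1 := fun ω => by simp [probOf, h _ ω, hμ.2]
  simp [entropy_eq_sum_mul_log, h1]

end Partition

section Submodularity

variable {Ω S T U : Type*} [Fintype Ω] [DecidableEq S] [DecidableEq T] [DecidableEq U]
  {μ : Ω → ℝ}

/-- The law with the same `(X, Z)` and `(Y, Z)` marginals under which `X` and `Y` are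
conditionally independent given `Z`. -/
noncomputable def condIndepCoupling (μ : Ω → ℝ) (X : Ω → S) (Y : Ω → T) (Z : Ω → U)
    (v : S × T × U) : ℝ :=
  probOf μ (fun ω => (X ω, Z ω)) (v.1, v.2.2) * probOf μ (fun ω => (Y ω, Z ω)) v.2 /
    probOf μ Z v.2.2

theorem condIndepCoupling_nonneg (hμ : ∀ ω, 0 ≤ μ ω) (X : Ω → S) (Y : Ω → T) (Z : Ω → U)
    (v : S × T × U) : 0 ≤ condIndepCoupling μ X Y Z v :=
  div_nonneg (mul_nonneg (probOf_nonneg hμ _ _) (probOf_nonneg hμ _ _)) (probOf_nonneg hμ _ _)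

variable [Fintype S] [Fintype T] [Fintype U]

theorem sum_condIndepCoupling (hμ : IsPMF μ) (X : Ω → S) (Y : Ω → T) (Z : Ω → U) :
    ∑ v, condIndepCoupling μ X Y Z v = 1 := by
  calc ∑ v, condIndepCoupling μ X Y Z v
      = ∑ z, (∑ x, probOf μ (fun ω => (X ω, Z ω)) (x, z)) *
          (∑ y, probOf μ (fun ω => (Y ω, Z ω)) (y, z)) / probOf μ Z z := by
        simp only [condIndepCoupling, Fintype.sum_prod_type, sum_mul_sum, Finset.sum_div]
        exact (sum_congr rfl fun x _ => sum_comm).trans sum_comm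
    -- `p * p / p = p` also when `p = 0`
    _ = ∑ z, probOf μ Z z := by simp only [sum_probOf_pair_left, mul_self_div_self]
    _ = 1 := sum_probOf hμ Z

theorem condMutualInfo_nonneg (hμ : IsPMF μ) (X : Ω → S) (Y : Ω → T) (Z : Ω → U) :
    0 ≤ condMutualInfo μ X Y Z := by
  set V := fun ω => (X ω, Y ω, Z ω)
  set a := fun ω => probOf μ V (V ω)
  set b := fun ω => probOf μ (fun ω => (X ω, Z ω)) (X ω, Z ω)
  set c := fun ω => probOf μ (fun ω => (Y ω, Z ω)) (Y ω, Z ω)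
  set d := fun ω => probOf μ Z (Z ω)
  set q := fun ω => condIndepCoupling μ X Y Z (V ω)
  have hI : condMutualInfo μ X Y Z =
      (∑ ω, μ ω * (log (a ω) + log (d ω) - log (b ω) - log (c ω))) / log 2 := by
    rw [condMutualInfo, entropy_eq_sum_mul_log, entropy_eq_sum_mul_log, entropy_eq_sum_mul_log,
      entropy_eq_sum_mul_log]
    simp only [mul_add, mul_sub, sum_add_distrib, sum_sub_distrib]
    ring
  have hgibbs : ∀ ω, μ ω * (1 - q ω / a ω) ≤
      μ ω * (log (a ω) + log (d ω) - log (b ω) - log (c ω)) := by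
    intro ω
    rcases (hμ.1 ω).eq_or_lt with h0 | hpos
    · simp [← h0]
    have ha : 0 < a ω := hpos.trans_le (le_probOf_apply hμ.1 _ ω)
    have hb : 0 < b ω := hpos.trans_le (le_probOf_apply hμ.1 _ ω)
    have hc : 0 < c ω := hpos.trans_le (le_probOf_apply hμ.1 _ ω)
    have hd : 0 < d ω := hpos.trans_le (le_probOf_apply hμ.1 _ ω)
    have hlog_q : log (q ω) = log (b ω) + log (c ω) - log (d ω) := by
      rw [show q ω = b ω * c ω / d ω from rfl, log_div (mul_pos hb hc).ne' hd.ne',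
        log_mul hb.ne' hc.ne']
    have := one_sub_div_le_log_sub_log ha (show 0 < q ω from div_pos (mul_pos hb hc) hd)
    exact mul_le_mul_of_nonneg_left (by linarith) hpos.le
  have hq : ∑ ω, μ ω * (q ω / a ω) ≤ 1 :=
    (sum_mul_div_probOf_le V (condIndepCoupling_nonneg hμ.1 X Y Z)).trans
      (sum_condIndepCoupling hμ X Y Z).le
  rw [hI]
  refine div_nonneg ?_ (log_nonneg one_le_two)
  calc 0 ≤ ∑ ω, μ ω * (1 - q ω / a ω) := by
        simp only [mul_sub, mul_one, sum_sub_distrib, hμ.2]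
        linarith
    _ ≤ _ := sum_le_sum fun ω _ => hgibbs ω

end Submodularity

section MutualInfo

variable {Ω S T U : Type*} [Fintype Ω] [Fintype S] [Fintype T] [Fintype U]
  [DecidableEq S] [DecidableEq T] [DecidableEq U] {μ : Ω → ℝ}

theorem mutualInfo_le_of_isFunctionOf (hμ : IsPMF μ) {A : Ω → S} {A' : Ω → T}
    (h : IsFunctionOf A' A) (V : Ω → U) : mutualInfo μ A' V ≤ mutualInfo μ A V := by
  -- the difference is `I(A; V | A')` once the redundant `A'` is merged into `A`
  have hA : entropy μ (fun ω => (A ω, A' ω)) = entropy μ A :=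
    entropy_congr_of_eq_iff fun ω ω' => by
      simpa only [Prod.mk.injEq, and_iff_left_iff_imp] using h ω ω'
  have hV : entropy μ (fun ω => (V ω, A' ω)) = entropy μ (fun ω => (A' ω, V ω)) :=
    entropy_congr_of_eq_iff fun ω ω' => by simp only [Prod.mk.injEq, and_comm]
  have hAV : entropy μ (fun ω => (A ω, V ω, A' ω)) = entropy μ (fun ω => (A ω, V ω)) :=
    entropy_congr_of_eq_iff fun ω ω' => by
      simp only [Prod.mk.injEq]
      exact ⟨fun e => ⟨e.1, e.2.1⟩, fun e => ⟨e.1, e.2, h ω ω' e.1⟩⟩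
  have := condMutualInfo_nonneg hμ A V A'
  rw [condMutualInfo, hA, hV, hAV] at this
  rw [mutualInfo, mutualInfo]
  linarith

theorem mutualInfo_nonneg (hμ : IsPMF μ) (X : Ω → S) (Y : Ω → T) : 0 ≤ mutualInfo μ X Y := by
  have hconst : mutualInfo μ (fun _ => ()) Y = 0 := by
    rw [mutualInfo, entropy_eq_zero_of_forall_eq hμ fun _ _ => rfl,
      entropy_congr_of_eq_iff (X := fun ω => ((), Y ω)) (Y := Y) (by simp)]
    ring
  exact hconst ▸ mutualInfo_le_of_isFunctionOf hμ (fun _ _ _ => rfl) Y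

end MutualInfo

theorem mutualInfo_sub_two_mul_mutualInfo_le {Ω α β γ γ' δ : Type*} [Fintype Ω]
    [Fintype α] [Fintype β] [Fintype γ] [Fintype γ'] [Fintype δ]
    [DecidableEq α] [DecidableEq β] [DecidableEq γ] [DecidableEq γ'] [DecidableEq δ]
    {μ : Ω → ℝ} (hμ : IsPMF μ) {M : Ω → α} {A : Ω → β} {P : Ω → γ} {P' : Ω → γ'}
    {V : Ω → δ} (hA : IsFunctionOf A fun ω => (M ω, P ω))
    (hP' : ∀ ω ω', (P ω, V ω) = (P ω', V ω') ↔ P' ω = P' ω') :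
    mutualInfo μ A V - 2 * mutualInfo μ P V ≤
      (entropy μ (fun ω => (M ω, P ω)) - entropy μ (fun ω => (M ω, P' ω))) -
        (entropy μ P - entropy μ P') := by
  have hMP := mutualInfo_le_of_isFunctionOf hμ hA V
  have hP := mutualInfo_nonneg hμ P V
  have hMPV : entropy μ (fun ω => ((M ω, P ω), V ω)) = entropy μ (fun ω => (M ω, P' ω)) :=
    entropy_congr_of_eq_iff fun ω ω' => by
      simp only [Prod.mk.injEq]
      rw [← hP', Prod.mk.injEq, and_assoc]
  have hPV : entropy μ (fun ω => (P ω, V ω)) = entropy μ P' := entropy_congr_of_eq_iff hP'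
  simp only [mutualInfo] at hMP hP ⊢
  linarith

theorem Fin.take_succ_eq_take_succ_iff {n : ℕ} {α : Type*} (i : Fin n) (v w : Fin n → α) :
    take i.succ i.succ.is_le v = take i.succ i.succ.is_le w ↔
      take i.castSucc i.castSucc.is_le v = take i.castSucc i.castSucc.is_le w ∧ v i = w i := by
  change take (i + 1) i.isLt v = take (i + 1) i.isLt w ↔
    take i i.isLt.le v = take i i.isLt.le w ∧ v ⟨i, i.isLt⟩ = w ⟨i, i.isLt⟩
  rw [take_succ_eq_snoc, take_succ_eq_snoc, snoc_inj]

theorem Fin.sum_univ_castSucc_sub_succ {n : ℕ} {M : Type*} [AddCommGroup M]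
    (f : Fin (n + 1) → M) : ∑ i : Fin n, (f i.castSucc - f i.succ) = f 0 - f (last n) := by
  induction n with
  | zero => simp
  | succ n ih =>
    rw [sum_univ_castSucc]
    simp only [succ_castSucc]
    rw [ih (fun i => f i.castSucc), succ_last, castSucc_zero]
    abel

/-- H(M) ≥ Σᵢ [I(M,Y^{i-1},Z^{i-1};Xᵢ,Yᵢ,Zᵢ) − 2 I(X^{i-1},Y^{i-1},Z^{i-1};Xᵢ,Yᵢ,Zᵢ)]. -/
theorem entropy_lower_bound_chain {Ω 𝓜 𝒳 𝒴 𝒵 : Type*} [Fintype Ω]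
    [Fintype 𝓜] [Fintype 𝒳] [Fintype 𝒴] [Fintype 𝒵]
    [DecidableEq 𝓜] [DecidableEq 𝒳] [DecidableEq 𝒴] [DecidableEq 𝒵]
    (n : ℕ) (μ : Ω → ℝ) (hμ : IsPMF μ)
    (M : Ω → 𝓜) (X : Ω → Fin n → 𝒳) (Y : Ω → Fin n → 𝒴) (Z : Ω → Fin n → 𝒵) :
    entropy μ M ≥
      ∑ i : Fin n,
        (mutualInfo μ
          (fun ω => (M ω,
            (fun j : Fin i.val => Y ω (Fin.castLE i.isLt.le j)),
            (fun j : Fin i.val => Z ω (Fin.castLE i.isLt.le j))))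
          (fun ω => (X ω i, Y ω i, Z ω i))
        - 2 * mutualInfo μ
          (fun ω => ((fun j : Fin i.val => X ω (Fin.castLE i.isLt.le j)),
            (fun j : Fin i.val => Y ω (Fin.castLE i.isLt.le j)),
            (fun j : Fin i.val => Z ω (Fin.castLE i.isLt.le j))))
          (fun ω => (X ω i, Y ω i, Z ω i))) := by
  let past (k : Fin (n + 1)) (ω : Ω) :=
    (Fin.take k k.is_le (X ω), Fin.take k k.is_le (Y ω), Fin.take k k.is_le (Z ω))
  let F (k : Fin (n + 1)) := entropy μ (fun ω => (M ω, past k ω))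
  let G (k : Fin (n + 1)) := entropy μ (past k)
  have hF0 : F 0 = entropy μ M := entropy_congr_of_eq_iff fun ω ω' => by simp [past]
  have hG0 : G 0 = 0 := entropy_eq_zero_of_forall_eq hμ fun ω ω' => by ext j <;> exact j.elim0
  have hlast : G (Fin.last n) ≤ F (Fin.last n) :=
    entropy_le_of_isFunctionOf hμ.1 fun ω ω' h => (Prod.mk.inj h).2
  calc _ ≤ ∑ i : Fin n, ((F i.castSucc - F i.succ) - (G i.castSucc - G i.succ)) := by
        refine sum_le_sum fun i _ => mutualInfo_sub_two_mul_mutualInfo_le hμ ?_ fun ω ω' => ?_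
        · exact fun ω ω' h => by simp_all
        · simp only [past, Prod.mk.injEq, Fin.take_succ_eq_take_succ_iff]
          tauto
    _ = (F 0 - F (Fin.last n)) - (G 0 - G (Fin.last n)) := by
        rw [sum_sub_distrib, Fin.sum_univ_castSucc_sub_succ, Fin.sum_univ_castSucc_sub_succ]
    _ ≤ entropy μ M := by linarith
end
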